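/- arXiv:2003.04530 — 5 statements merged into one kernel-verified Lean document; each statement's English description precedes it below -/
import Mathlib

section
/- Let n ≥ 2 be an integer, α ∈ [0,n), let g : ℝⁿ → [0,∞) be locally integrable, let Ω ⊆ ℝⁿ be measurable, let ξ ∈ ℝⁿ, ρ > 0 and λ > 0. Suppose there exists z₂ ∈ Ω ∩ B_ρ(ξ) with M_α g(z₂) ≤ λ. Then for every δ ≥ 3^{n+1}, L^n({ζ ∈ Ω ∩ B_ρ(ξ) : M_α g(ζ) > δλ}) ≤ L^n({ζ ∈ Ω ∩ B_ρ(ξ) : M_α(χ_{B_{2ρ}(ξ)} g)(ζ) > δλ}), where χ_{B_{2ρ}(ξ)} denotes the indicator function of the ball B_{2ρ}(ξ). (In the paper this is applied with g = |∇u|^p for a weak solution u.) -/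
open MeasureTheory ENNReal

/-- The fractional maximal function `M_α h (x) = sup_{ρ>0} ρ^α ⨍_{B_ρ(x)} |h|`,
valued in `ℝ≥0∞`. -/
noncomputable def fracMax (n : ℕ) (α : ℝ) (h : EuclideanSpace ℝ (Fin n) → ℝ)
    (x : EuclideanSpace ℝ (Fin n)) : ℝ≥0∞ :=
  ⨆ (ρ : ℝ) (_ : 0 < ρ),
    ENNReal.ofReal (ρ ^ α) * ⨍⁻ y in Metric.ball x ρ, ENNReal.ofReal |h y| ∂volume

/-!
If `M_α g(ζ) > δλ` were witnessed by a ball `B_r(ζ)` with `r > ρ`, then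
`B_r(ζ) ⊆ B_{3r}(z₂)`, so that average is at most `3ⁿ` times the average over `B_{3r}(z₂)`,
and `r^α ≤ (3r)^α`; hence the witness would be at most `3ⁿ M_α g(z₂) ≤ 3ⁿ λ ≤ δλ`.
So the witnessing radius is at most `ρ`, and then `B_r(ζ) ⊆ B_{2ρ}(ξ)`, where `g` and
`χ_{B_{2ρ}(ξ)} g` agree.
-/

open Metric Module

theorem setLAverage_ball_le_of_subset_ball {E : Type*} [NormedAddCommGroup E]
    [NormedSpace ℝ E] [MeasurableSpace E] [BorelSpace E] [FiniteDimensional ℝ E]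
    (μ : Measure E) [μ.IsAddHaarMeasure] (f : E → ℝ≥0∞) {x y : E} {r k : ℝ} (hk : 0 < k)
    (hsub : ball x r ⊆ ball y (k * r)) :
    ⨍⁻ z in ball x r, f z ∂μ ≤
      ENNReal.ofReal (k ^ finrank ℝ E) * ⨍⁻ z in ball y (k * r), f z ∂μ := by
  have hvol : μ (ball y (k * r)) = ENNReal.ofReal (k ^ finrank ℝ E) * μ (ball x r) := by
    rw [Measure.addHaar_ball_mul_of_pos μ y hk, Measure.addHaar_ball_center μ x]
  have hkE : ENNReal.ofReal (k ^ finrank ℝ E) ≠ 0 := by simp [hk]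
  rw [setLAverage_eq, setLAverage_eq, hvol, ← mul_div_assoc,
    ENNReal.mul_div_mul_left _ _ hkE ofReal_ne_top]
  gcongr

theorem setLAverage_abs_indicator_of_subset {X : Type*} [MeasurableSpace X] {μ : Measure X}
    {f : X → ℝ} {s t : Set X} (ht : MeasurableSet t) (hts : t ⊆ s) :
    ⨍⁻ y in t, ENNReal.ofReal |s.indicator f y| ∂μ =
      ⨍⁻ y in t, ENNReal.ofReal |f y| ∂μ :=
  setLAverage_congr_fun ht fun _ hy => by rw [Set.indicator_of_mem (hts hy)]

section fracMax

variable {n : ℕ} {α : ℝ} {h : EuclideanSpace ℝ (Fin n) → ℝ}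

theorem le_fracMax {r : ℝ} (hr : 0 < r) (x : EuclideanSpace ℝ (Fin n)) :
    ENNReal.ofReal (r ^ α) * ⨍⁻ y in ball x r, ENNReal.ofReal |h y| ∂volume ≤
      fracMax n α h x :=
  le_iSup₂ (f := fun r (_ : 0 < r) =>
    ENNReal.ofReal (r ^ α) * ⨍⁻ y in ball x r, ENNReal.ofReal |h y| ∂volume) r hr

theorem lt_fracMax_iff {x : EuclideanSpace ℝ (Fin n)} {c : ℝ≥0∞} :
    c < fracMax n α h x ↔
      ∃ r, 0 < r ∧
        c < ENNReal.ofReal (r ^ α) * ⨍⁻ y in ball x r, ENNReal.ofReal |h y| ∂volume := by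
  simp only [fracMax, lt_iSup_iff, exists_prop]

theorem rpow_mul_setLAverage_le_of_subset_ball (hα : 0 ≤ α) {x y : EuclideanSpace ℝ (Fin n)}
    {r k : ℝ} (hr : 0 < r) (hk : 1 ≤ k) (hsub : ball x r ⊆ ball y (k * r)) :
    ENNReal.ofReal (r ^ α) * ⨍⁻ z in ball x r, ENNReal.ofReal |h z| ∂volume
      ≤ ENNReal.ofReal (k ^ n) * fracMax n α h y := by
  have hk0 : 0 < k := zero_lt_one.trans_le hk
  have hpow : r ^ α ≤ (k * r) ^ α := Real.rpow_le_rpow hr.le (by nlinarith) hα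
  have havg := setLAverage_ball_le_of_subset_ball volume (fun z => ENNReal.ofReal |h z|) hk0 hsub
  rw [finrank_euclideanSpace_fin] at havg
  refine (mul_le_mul' (ofReal_le_ofReal hpow) havg).trans ?_
  rw [mul_left_comm]
  gcongr
  exact le_fracMax (mul_pos hk0 hr) y

theorem lt_fracMax_indicator_ball (hα : 0 ≤ α) {ξ ζ z : EuclideanSpace ℝ (Fin n)} {ρ : ℝ}
    {c : ℝ≥0∞} (hζ : ζ ∈ ball ξ ρ) (hz : z ∈ ball ξ ρ)
    (hc : ENNReal.ofReal (3 ^ n) * fracMax n α h z ≤ c) (hlt : c < fracMax n α h ζ) :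
    c < fracMax n α ((ball ξ (2 * ρ)).indicator h) ζ := by
  obtain ⟨r, hr, hterm⟩ := lt_fracMax_iff.mp hlt
  rw [mem_ball] at hζ hz
  have hrρ : r ≤ ρ := by
    by_contra! hρr
    have hsub : ball ζ r ⊆ ball z (3 * r) := ball_subset_ball' <| by
      linarith [dist_triangle_right ζ z ξ]
    exact hterm.not_ge <|
      (rpow_mul_setLAverage_le_of_subset_ball hα hr (by norm_num) hsub).trans hc
  have hsub : ball ζ r ⊆ ball ξ (2 * ρ) := ball_subset_ball' (by linarith)
  rw [← setLAverage_abs_indicator_of_subset measurableSet_ball hsub] at hterm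
  exact hterm.trans_le (le_fracMax hr ζ)

end fracMax

theorem levelset_fracMax_localize_general (n : ℕ) (α : ℝ) (hα0 : 0 ≤ α)
    (g : EuclideanSpace ℝ (Fin n) → ℝ)
    (Ω : Set (EuclideanSpace ℝ (Fin n)))
    (ξ : EuclideanSpace ℝ (Fin n)) (ρ lam : ℝ)
    (z₂ : EuclideanSpace ℝ (Fin n)) (hz₂ : z₂ ∈ Ω ∩ Metric.ball ξ ρ)
    (hz₂M : fracMax n α g z₂ ≤ ENNReal.ofReal lam)
    (δ : ℝ) (hδ : 3 ^ (n + 1) ≤ δ) :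
    volume {ζ ∈ Ω ∩ Metric.ball ξ ρ | ENNReal.ofReal (δ * lam) < fracMax n α g ζ}
      ≤ volume {ζ ∈ Ω ∩ Metric.ball ξ ρ |
          ENNReal.ofReal (δ * lam) < fracMax n α ((Metric.ball ξ (2 * ρ)).indicator g) ζ} := by
  have h3δ : (3 : ℝ) ^ n ≤ δ := (pow_le_pow_right₀ (by norm_num) n.le_succ).trans hδ
  have hc : ENNReal.ofReal (3 ^ n) * fracMax n α g z₂ ≤ ENNReal.ofReal (δ * lam) := by
    rw [ENNReal.ofReal_mul (by linarith [pow_pos (three_pos (α := ℝ)) n])]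
    gcongr
  refine measure_mono fun ζ ⟨hζ, hlt⟩ => ⟨hζ, ?_⟩
  exact lt_fracMax_indicator_ball hα0 hζ.2 hz₂.2 hc hlt

/-- Level sets of `M_α g` above `δλ` inside `Ω ∩ B_ρ(ξ)` are controlled by level sets
of the localized maximal function `M_α(χ_{B_{2ρ}(ξ)} g)`, provided `M_α g ≤ λ` at some
point of `Ω ∩ B_ρ(ξ)` and `δ ≥ 3^{n+1}`. -/
theorem levelset_fracMax_localize (n : ℕ) (hn : 2 ≤ n) (α : ℝ) (hα0 : 0 ≤ α) (hα : α < n)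
    (g : EuclideanSpace ℝ (Fin n) → ℝ) (hg0 : ∀ x, 0 ≤ g x)
    (hgloc : MeasureTheory.LocallyIntegrable g volume)
    (Ω : Set (EuclideanSpace ℝ (Fin n))) (hΩ : MeasurableSet Ω)
    (ξ : EuclideanSpace ℝ (Fin n)) (ρ lam : ℝ) (hρ : 0 < ρ) (hlam : 0 < lam)
    (z₂ : EuclideanSpace ℝ (Fin n)) (hz₂ : z₂ ∈ Ω ∩ Metric.ball ξ ρ)
    (hz₂M : fracMax n α g z₂ ≤ ENNReal.ofReal lam)
    (δ : ℝ) (hδ : 3 ^ (n + 1) ≤ δ) :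
    volume {ζ ∈ Ω ∩ Metric.ball ξ ρ | ENNReal.ofReal (δ * lam) < fracMax n α g ζ}
      ≤ volume {ζ ∈ Ω ∩ Metric.ball ξ ρ |
          ENNReal.ofReal (δ * lam) < fracMax n α ((Metric.ball ξ (2 * ρ)).indicator g) ζ} :=
  levelset_fracMax_localize_general n α hα0 g Ω ξ ρ lam z₂ hz₂ hz₂M δ hδ
end

section
/- Let n ≥ 2 be an integer, α ∈ [0,n), and let Ω ⊂ ℝⁿ be a bounded measurable set with diameter D₀ > 0. Let h, k : ℝⁿ → [0,∞) be integrable functions vanishing almost everywhere outside Ω and satisfying ∫_Ω h dx ≤ C₀ ∫_Ω k dx for some constant C₀ > 0. Let λ₁ > 0 and suppose that some z₁ ∈ Ω satisfies M_α k(z₁) ≤ λ₁. Then for every R > 0 there exists a constant C > 0, depending only on n, α, C₀ and the ratio D₀/R, such that for every λ₂ > 0, L^n({ζ ∈ Ω : M_α h(ζ) > λ₂}) ≤ C · (λ₁/λ₂)^{n/(n−α)} · L^n(B_R(0)). (In the paper this is applied with h = |∇u|^p and k = |F|^p + |f|^{p/(p−1)} + |∇g|^p.) -/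
/-!
The hypothesis at `z₁` bounds the mass of `k` on the ball `B(z₁, 2D₀) ⊇ Ω` by
`λ₁ (2D₀)^{n-α} |B₁|`, so `‖h‖₁ ≤ A |B₁|` with `A = C₀ λ₁ (2D₀)^{n-α}`. A point with
`M_α h > λ₂` is the centre of a ball `B_ρ` with `λ₂ |B_ρ| ≤ ρ^α ∫_{B_ρ} h ≤ ρ^α A |B₁|`, which
forces `ρ ≤ r₀ = (A/λ₂)^{1/(n-α)}` and `∫_{B_ρ} h ≥ λ₂ r₀^{-α} |B_ρ|`. The Vitali covering
lemma for these balls of bounded radius gives `|{M_α h > λ₂}| ≤ 4ⁿ (A/λ₂)^{n/(n-α)} |B₁|`.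
-/

open MeasureTheory ENNReal

open Metric Set Module

theorem mul_measure_le_of_forall_exists_ball {E : Type*} [NormedAddCommGroup E]
    [NormedSpace ℝ E] [FiniteDimensional ℝ E] [MeasurableSpace E] [BorelSpace E]
    (μ : Measure E) [μ.IsAddHaarMeasure] {f : E → ℝ≥0∞} {S : Set E} {r₀ : ℝ} {t : ℝ≥0∞}
    (hS : ∀ x ∈ S, ∃ ρ ∈ Ioc 0 r₀, t * μ (ball x ρ) ≤ ∫⁻ y in ball x ρ, f y ∂μ) :
    t * μ S ≤ 4 ^ finrank ℝ E * ∫⁻ y, f y ∂μ := by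
  choose! r hr₀ hr using hS
  obtain ⟨u, huS, hdisj, hcov⟩ := Vitali.exists_disjoint_subfamily_covering_enlargement_closedBall
    S id r r₀ (fun x hx => (hr₀ x hx).2) 4 (by norm_num)
  have hpos : ∀ x ∈ u, 0 < r x := fun x hx => (hr₀ x (huS hx)).1
  have hu : u.Countable := hdisj.countable_of_nonempty_interior fun x hx => by
    simpa [interior_closedBall _ (hpos x hx).ne'] using hpos x hx
  have hball_disj : u.PairwiseDisjoint fun x => ball x (r x) :=
    hdisj.mono fun _ => ball_subset_closedBall
  have hS_sub : S ⊆ ⋃ x ∈ u, closedBall x (4 * r x) := fun x hx => by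
    obtain ⟨y, hy, hsub⟩ := hcov x hx
    exact mem_biUnion hy (hsub (mem_closedBall_self (hr₀ x hx).1.le))
  have henlarge : ∀ x ∈ u, μ (closedBall x (4 * r x)) = 4 ^ finrank ℝ E * μ (ball x (r x)) :=
    fun x hx => by
      rw [Measure.addHaar_closedBall _ _ (by linarith [hpos x hx]),
        Measure.addHaar_ball_of_pos _ _ (hpos x hx), mul_pow, ENNReal.ofReal_mul (by positivity),
        ENNReal.ofReal_pow (by norm_num), ENNReal.ofReal_ofNat, mul_assoc]
  calc t * μ S ≤ t * ∑' x : u, μ (closedBall x (4 * r x)) :=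
        mul_le_mul_right ((measure_mono hS_sub).trans (measure_biUnion_le μ hu _)) t
    _ = 4 ^ finrank ℝ E * ∑' x : u, t * μ (ball x (r x)) := by
        rw [← ENNReal.tsum_mul_left, ← ENNReal.tsum_mul_left]
        refine tsum_congr fun x => ?_
        rw [henlarge x x.2, mul_left_comm]
    _ ≤ 4 ^ finrank ℝ E * ∑' x : u, ∫⁻ y in ball x (r x), f y ∂μ := by
        gcongr with x
        exact hr x (huS x.2)
    _ = 4 ^ finrank ℝ E * ∫⁻ y in ⋃ x ∈ u, ball x (r x), f y ∂μ := by
        rw [lintegral_biUnion hu (fun _ _ => measurableSet_ball) hball_disj]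
    _ ≤ 4 ^ finrank ℝ E * ∫⁻ y, f y ∂μ := by
        gcongr
        exact Measure.restrict_le_self

theorem le_rpow_inv_of_mul_pow_le {n : ℕ} {α lam A ρ : ℝ} (hα : α < n) (hρ : 0 < ρ)
    (hlam : 0 < lam) (h : lam * ρ ^ n ≤ ρ ^ α * A) : ρ ≤ (A / lam) ^ ((n : ℝ) - α)⁻¹ := by
  have hρα : 0 < ρ ^ α := Real.rpow_pos_of_pos hρ α
  have hA : 0 ≤ A := nonneg_of_mul_nonneg_right (h.trans' (by positivity)) hρα
  rw [Real.le_rpow_inv_iff_of_pos hρ.le (by positivity) (sub_pos.2 hα), Real.rpow_sub hρ,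
    Real.rpow_natCast, div_le_div_iff₀ hρα hlam]
  linarith

theorem mul_rpow_inv_rpow_eq {n : ℕ} {α q : ℝ} (hα : α < n) (hq : 0 < q) :
    q * (q ^ ((n : ℝ) - α)⁻¹) ^ α = q ^ ((n : ℝ) / (n - α)) := by
  have hnα : (n : ℝ) - α ≠ 0 := (sub_pos.2 hα).ne'
  rw [← Real.rpow_mul hq.le]
  nth_rw 1 [← Real.rpow_one q]
  rw [← Real.rpow_add hq]
  congr 1
  field_simp
  ring

theorem lintegral_ofReal_abs_le_of_setIntegral_le {X : Type*} [MeasurableSpace X]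
    {μ : Measure X} {s : Set X} {f g : X → ℝ} {c : ℝ} (hc : 0 ≤ c) (hf0 : ∀ x, 0 ≤ f x)
    (hf : Integrable f μ) (hfs : ∀ᵐ x ∂μ, x ∉ s → f x = 0)
    (hfg : ∫ x in s, f x ∂μ ≤ c * ∫ x in s, g x ∂μ) :
    ∫⁻ x, ENNReal.ofReal |f x| ∂μ ≤ ENNReal.ofReal c * ∫⁻ x in s, ENNReal.ofReal |g x| ∂μ := by
  simp_rw [abs_of_nonneg (hf0 _)]
  calc ∫⁻ x, ENNReal.ofReal (f x) ∂μ = ENNReal.ofReal (∫ x in s, f x ∂μ) := by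
        rw [setIntegral_eq_integral_of_ae_compl_eq_zero hfs,
          ofReal_integral_eq_lintegral_ofReal hf (ae_of_all _ hf0)]
    _ ≤ ENNReal.ofReal c * ENNReal.ofReal (∫ x in s, g x ∂μ) := by
        rw [← ENNReal.ofReal_mul hc]
        exact ENNReal.ofReal_le_ofReal hfg
    _ ≤ ENNReal.ofReal c * ∫⁻ x in s, ENNReal.ofReal |g x| ∂μ := by
        gcongr
        simp_rw [← Real.enorm_eq_ofReal_abs]
        exact (Real.ofReal_le_enorm _).trans (enorm_integral_le_lintegral_enorm _)

section FracMax

variable {n : ℕ} {α : ℝ} {h : EuclideanSpace ℝ (Fin n) → ℝ} {x : EuclideanSpace ℝ (Fin n)}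
  {ρ : ℝ}

theorem ofReal_rpow_mul_setLIntegral_ball_eq (hρ : 0 < ρ) :
    ENNReal.ofReal (ρ ^ α) * ∫⁻ y in ball x ρ, ENNReal.ofReal |h y|
      = ENNReal.ofReal (ρ ^ α) * (⨍⁻ y in ball x ρ, ENNReal.ofReal |h y| ∂volume)
        * volume (ball x ρ) := by
  rw [setLAverage_eq, mul_assoc,
    ENNReal.div_mul_cancel (measure_ball_pos _ _ hρ).ne' measure_ball_lt_top.ne]

theorem ofReal_rpow_mul_setLIntegral_ball_le (hρ : 0 < ρ) :
    ENNReal.ofReal (ρ ^ α) * ∫⁻ y in ball x ρ, ENNReal.ofReal |h y|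
      ≤ fracMax n α h x * volume (ball x ρ) := by
  rw [ofReal_rpow_mul_setLIntegral_ball_eq hρ]
  gcongr
  exact le_iSup₂_of_le (f := fun ρ (_ : 0 < ρ) =>
    ENNReal.ofReal (ρ ^ α) * ⨍⁻ y in ball x ρ, ENNReal.ofReal |h y| ∂volume) ρ hρ le_rfl

theorem exists_ball_of_lt_fracMax {c : ℝ≥0∞} (hc : c < fracMax n α h x) :
    ∃ ρ > 0, c * volume (ball x ρ)
      ≤ ENNReal.ofReal (ρ ^ α) * ∫⁻ y in ball x ρ, ENNReal.ofReal |h y| := by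
  simp only [fracMax, lt_iSup_iff] at hc
  obtain ⟨ρ, hρ, hlt⟩ := hc
  refine ⟨ρ, hρ, ?_⟩
  rw [ofReal_rpow_mul_setLIntegral_ball_eq hρ]
  gcongr

theorem setLIntegral_ball_le_of_fracMax_le {lam : ℝ} (hρ : 0 < ρ)
    (hM : fracMax n α h x ≤ ENNReal.ofReal lam) :
    ∫⁻ y in ball x ρ, ENNReal.ofReal |h y|
      ≤ ENNReal.ofReal (lam * ρ ^ ((n : ℝ) - α))
        * volume (ball (0 : EuclideanSpace ℝ (Fin n)) 1) := by
  have hρα : 0 < ρ ^ α := Real.rpow_pos_of_pos hρ α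
  rw [← ENNReal.mul_le_mul_iff_right (ENNReal.ofReal_pos.2 hρα).ne' ENNReal.ofReal_ne_top]
  calc _ ≤ fracMax n α h x * volume (ball x ρ) := ofReal_rpow_mul_setLIntegral_ball_le hρ
    _ ≤ ENNReal.ofReal lam * volume (ball x ρ) := by gcongr
    _ = _ := by
      rw [Measure.addHaar_ball_of_pos _ _ hρ, finrank_euclideanSpace_fin, ← mul_assoc,
        ← mul_assoc, ← ENNReal.ofReal_mul' (by positivity), ← ENNReal.ofReal_mul hρα.le,
        Real.rpow_sub hρ, Real.rpow_natCast]
      field_simp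

theorem exists_ball_le_setLIntegral_of_lt_fracMax (hα0 : 0 ≤ α) (hα : α < n) {A lam : ℝ}
    (hA : 0 ≤ A) (hlam : 0 < lam)
    (hmass : ∫⁻ y, ENNReal.ofReal |h y|
      ≤ ENNReal.ofReal A * volume (ball (0 : EuclideanSpace ℝ (Fin n)) 1))
    (hx : ENNReal.ofReal lam < fracMax n α h x) :
    ∃ ρ ∈ Ioc 0 ((A / lam) ^ ((n : ℝ) - α)⁻¹),
      ENNReal.ofReal (lam / ((A / lam) ^ ((n : ℝ) - α)⁻¹) ^ α) * volume (ball x ρ)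
        ≤ ∫⁻ y in ball x ρ, ENNReal.ofReal |h y| := by
  set V := volume (ball (0 : EuclideanSpace ℝ (Fin n)) 1)
  obtain ⟨ρ, hρ, hle⟩ := exists_ball_of_lt_fracMax hx
  have hρα : 0 < ρ ^ α := Real.rpow_pos_of_pos hρ α
  have hρr₀ : ρ ≤ (A / lam) ^ ((n : ℝ) - α)⁻¹ := by
    refine le_rpow_inv_of_mul_pow_le hα hρ hlam ?_
    have : ENNReal.ofReal (lam * ρ ^ n) * V ≤ ENNReal.ofReal (ρ ^ α * A) * V := calc
      _ = ENNReal.ofReal lam * volume (ball x ρ) := by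
        rw [Measure.addHaar_ball_of_pos _ _ hρ, finrank_euclideanSpace_fin,
          ENNReal.ofReal_mul hlam.le, mul_assoc]
      _ ≤ ENNReal.ofReal (ρ ^ α) * ∫⁻ y in ball x ρ, ENNReal.ofReal |h y| := hle
      _ ≤ ENNReal.ofReal (ρ ^ α) * (ENNReal.ofReal A * V) := by
        gcongr
        exact (setLIntegral_le_lintegral _ _).trans hmass
      _ = _ := by rw [ENNReal.ofReal_mul hρα.le, mul_assoc]
    exact (ENNReal.ofReal_le_ofReal_iff (by positivity)).1
      ((ENNReal.mul_le_mul_iff_left (measure_ball_pos _ _ one_pos).ne'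
        measure_ball_lt_top.ne).1 this)
  refine ⟨ρ, ⟨hρ, hρr₀⟩, ?_⟩
  calc _ ≤ ENNReal.ofReal lam / ENNReal.ofReal (ρ ^ α) * volume (ball x ρ) := by
        rw [← ENNReal.ofReal_div_of_pos hρα]
        gcongr
    _ ≤ ∫⁻ y in ball x ρ, ENNReal.ofReal |h y| := by
        rw [← ENNReal.mul_div_right_comm, ENNReal.div_le_iff'
          (ENNReal.ofReal_pos.2 hρα).ne' ENNReal.ofReal_ne_top]
        exact hle

theorem volume_lt_fracMax_le (hα0 : 0 ≤ α) (hα : α < n) {A lam : ℝ} (hA : 0 < A)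
    (hlam : 0 < lam)
    (hmass : ∫⁻ y, ENNReal.ofReal |h y|
      ≤ ENNReal.ofReal A * volume (ball (0 : EuclideanSpace ℝ (Fin n)) 1)) :
    volume {x | ENNReal.ofReal lam < fracMax n α h x}
      ≤ ENNReal.ofReal (4 ^ n * (A / lam) ^ ((n : ℝ) / (n - α)))
        * volume (ball (0 : EuclideanSpace ℝ (Fin n)) 1) := by
  set r₀ := (A / lam) ^ ((n : ℝ) - α)⁻¹
  set t := ENNReal.ofReal (lam / r₀ ^ α)
  have hweak : t * volume {x | ENNReal.ofReal lam < fracMax n α h x}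
      ≤ 4 ^ finrank ℝ (EuclideanSpace ℝ (Fin n)) * ∫⁻ y, ENNReal.ofReal |h y| :=
    mul_measure_le_of_forall_exists_ball volume
      fun x hx => exists_ball_le_setLIntegral_of_lt_fracMax hα0 hα hA.le hlam hmass hx
  rw [finrank_euclideanSpace_fin] at hweak
  have hr₀α : 0 < r₀ ^ α := by positivity
  have ht0 : t ≠ 0 := (ENNReal.ofReal_pos.2 (by positivity)).ne'
  rw [← ENNReal.mul_le_mul_iff_right ht0 ENNReal.ofReal_ne_top]
  calc _ ≤ 4 ^ n * ∫⁻ y, ENNReal.ofReal |h y| := hweak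
    _ ≤ 4 ^ n * (ENNReal.ofReal A * volume (ball (0 : EuclideanSpace ℝ (Fin n)) 1)) := by
      gcongr
    _ = t * (ENNReal.ofReal (4 ^ n * (A / lam) ^ ((n : ℝ) / (n - α)))
          * volume (ball (0 : EuclideanSpace ℝ (Fin n)) 1)) := by
      rw [← mul_assoc, ← mul_assoc, ← ENNReal.ofReal_mul (by positivity),
        ← ENNReal.ofReal_ofNat, ← ENNReal.ofReal_pow (by norm_num),
        ← ENNReal.ofReal_mul (by positivity), ← mul_rpow_inv_rpow_eq hα (by positivity)]
      congr 2
      change _ = lam / r₀ ^ α * (4 ^ n * (A / lam * r₀ ^ α))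
      field_simp

theorem lintegral_ofReal_abs_le_of_fracMax_le {k : EuclideanSpace ℝ (Fin n) → ℝ}
    {Ω : Set (EuclideanSpace ℝ (Fin n))} {c lam r : ℝ} (hc : 0 ≤ c) (hr : 0 < r)
    (hΩ : Ω ⊆ ball x r) (hh0 : ∀ y, 0 ≤ h y) (hh : Integrable h volume)
    (hhΩ : ∀ᵐ y, y ∉ Ω → h y = 0) (hhk : ∫ y in Ω, h y ≤ c * ∫ y in Ω, k y)
    (hM : fracMax n α k x ≤ ENNReal.ofReal lam) :
    ∫⁻ y, ENNReal.ofReal |h y|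
      ≤ ENNReal.ofReal (c * (lam * r ^ ((n : ℝ) - α)))
        * volume (ball (0 : EuclideanSpace ℝ (Fin n)) 1) := calc
  _ ≤ ENNReal.ofReal c * ∫⁻ y in Ω, ENNReal.ofReal |k y| :=
    lintegral_ofReal_abs_le_of_setIntegral_le hc hh0 hh hhΩ hhk
  _ ≤ ENNReal.ofReal c * ∫⁻ y in ball x r, ENNReal.ofReal |k y| := by gcongr
  _ ≤ ENNReal.ofReal c * (ENNReal.ofReal (lam * r ^ ((n : ℝ) - α))
        * volume (ball (0 : EuclideanSpace ℝ (Fin n)) 1)) := by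
    gcongr
    exact setLIntegral_ball_le_of_fracMax_le hr hM
  _ = _ := by rw [← mul_assoc, ← ENNReal.ofReal_mul hc]

end FracMax

theorem levelset_fracMax_global_general (n : ℕ) (α : ℝ) (hα0 : 0 ≤ α) (hα : α < n)
    (Ω : Set (EuclideanSpace ℝ (Fin n)))
    (D₀ : ℝ) (hD₀ : 0 < D₀) (hdiam : Metric.diam Ω = D₀)
    (h k : EuclideanSpace ℝ (Fin n) → ℝ) (hh0 : ∀ x, 0 ≤ h x)
    (hhint : MeasureTheory.Integrable h volume)
    (hhsupp : ∀ᵐ x ∂volume, x ∉ Ω → h x = 0)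
    (C₀ : ℝ) (hC₀ : 0 < C₀) (hhk : ∫ x in Ω, h x ≤ C₀ * ∫ x in Ω, k x)
    (lam₁ : ℝ) (hlam₁ : 0 < lam₁)
    (z₁ : EuclideanSpace ℝ (Fin n)) (hz₁ : z₁ ∈ Ω)
    (hz₁M : fracMax n α k z₁ ≤ ENNReal.ofReal lam₁) :
    ∀ R : ℝ, 0 < R → ∃ C : ℝ, 0 < C ∧
      ∀ lam₂ : ℝ, 0 < lam₂ →
        volume {ζ ∈ Ω | ENNReal.ofReal lam₂ < fracMax n α h ζ}
          ≤ ENNReal.ofReal (C * (lam₁ / lam₂) ^ ((n : ℝ) / ((n : ℝ) - α)))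
              * volume (Metric.ball (0 : EuclideanSpace ℝ (Fin n)) R) := by
  intro R hR
  have hΩb : Bornology.IsBounded Ω :=
    by_contra fun hb => hD₀.ne' (hdiam ▸ diam_eq_zero_of_unbounded hb)
  have hΩ : Ω ⊆ ball z₁ (2 * D₀) := fun x hx =>
    mem_ball.2 ((dist_le_diam_of_mem hΩb hx hz₁).trans_lt (by linarith))
  set A := C₀ * (lam₁ * (2 * D₀) ^ ((n : ℝ) - α))
  have hmass : ∫⁻ y, ENNReal.ofReal |h y|
      ≤ ENNReal.ofReal A * volume (ball (0 : EuclideanSpace ℝ (Fin n)) 1) :=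
    lintegral_ofReal_abs_le_of_fracMax_le hC₀.le (by positivity) hΩ hh0 hhint hhsupp hhk hz₁M
  set β := (n : ℝ) / (n - α)
  refine ⟨4 ^ n * C₀ ^ β * (2 * D₀ / R) ^ n, by positivity, fun lam₂ hlam₂ => ?_⟩
  calc volume {ζ ∈ Ω | ENNReal.ofReal lam₂ < fracMax n α h ζ}
      ≤ volume {ζ | ENNReal.ofReal lam₂ < fracMax n α h ζ} := measure_mono fun ζ hζ => hζ.2
    _ ≤ ENNReal.ofReal (4 ^ n * (A / lam₂) ^ β)
          * volume (ball (0 : EuclideanSpace ℝ (Fin n)) 1) :=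
      volume_lt_fracMax_le hα0 hα (by positivity) hlam₂ hmass
    _ = _ := by
      rw [Measure.addHaar_ball_of_pos _ _ hR, finrank_euclideanSpace_fin, ← mul_assoc,
        ← ENNReal.ofReal_mul (by positivity)]
      congr 2
      have hsplit : A / lam₂ = C₀ * (2 * D₀) ^ ((n : ℝ) - α) * (lam₁ / lam₂) := by ring
      have hexp : ((n : ℝ) - α) * β = n := mul_div_cancel₀ _ (sub_pos.2 hα).ne'
      rw [hsplit, Real.mul_rpow (by positivity) (by positivity),
        Real.mul_rpow (by positivity) (by positivity), ← Real.rpow_mul (by positivity), hexp,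
        Real.rpow_natCast, div_pow]
      field_simp

/-- Level-set estimate (Lemma 3.2 of the paper, in abstract form): if `h, k ≥ 0` are
integrable, supported a.e. in a bounded set `Ω` of diameter `D₀`, with
`∫_Ω h ≤ C₀ ∫_Ω k` and `M_α k (z₁) ≤ λ₁` at some `z₁ ∈ Ω`, then for every `R > 0`
there is `C > 0` (depending only on `n, α, C₀, D₀/R`) with
`L^n({M_α h > λ₂} ∩ Ω) ≤ C (λ₁/λ₂)^{n/(n-α)} L^n(B_R(0))` for all `λ₂ > 0`. -/
theorem levelset_fracMax_global (n : ℕ) (hn : 2 ≤ n) (α : ℝ) (hα0 : 0 ≤ α) (hα : α < n)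
    (Ω : Set (EuclideanSpace ℝ (Fin n))) (hΩmeas : MeasurableSet Ω)
    (hΩb : Bornology.IsBounded Ω) (D₀ : ℝ) (hD₀ : 0 < D₀) (hdiam : Metric.diam Ω = D₀)
    (h k : EuclideanSpace ℝ (Fin n) → ℝ) (hh0 : ∀ x, 0 ≤ h x) (hk0 : ∀ x, 0 ≤ k x)
    (hhint : MeasureTheory.Integrable h volume) (hkint : MeasureTheory.Integrable k volume)
    (hhsupp : ∀ᵐ x ∂volume, x ∉ Ω → h x = 0) (hksupp : ∀ᵐ x ∂volume, x ∉ Ω → k x = 0)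
    (C₀ : ℝ) (hC₀ : 0 < C₀) (hhk : ∫ x in Ω, h x ≤ C₀ * ∫ x in Ω, k x)
    (lam₁ : ℝ) (hlam₁ : 0 < lam₁)
    (z₁ : EuclideanSpace ℝ (Fin n)) (hz₁ : z₁ ∈ Ω)
    (hz₁M : fracMax n α k z₁ ≤ ENNReal.ofReal lam₁) :
    ∀ R : ℝ, 0 < R → ∃ C : ℝ, 0 < C ∧
      ∀ lam₂ : ℝ, 0 < lam₂ →
        volume {ζ ∈ Ω | ENNReal.ofReal lam₂ < fracMax n α h ζ}
          ≤ ENNReal.ofReal (C * (lam₁ / lam₂) ^ ((n : ℝ) / ((n : ℝ) - α)))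
              * volume (Metric.ball (0 : EuclideanSpace ℝ (Fin n)) R) :=
  levelset_fracMax_global_general n α hα0 hα Ω D₀ hD₀ hdiam h k hh0 hhint hhsupp C₀ hC₀ hhk lam₁
    hlam₁ z₁ hz₁ hz₁M
end

section
/- Let n ≥ 2 be an integer, 1 < p < 2 a real number, and let z₁, z₂ ∈ ℝⁿ with z₁ and z₂ not both zero. Then |z₁ − z₂|^p ≤ 4^p · (|z₁|^p + |z₁ − z₂|^p)^{(2−p)/2} · ((|z₁|² + |z₂|²)^{(p−2)/2} |z₁ − z₂|²)^{p/2}. -/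
open Real

private lemma key_ineq (p a b d : ℝ) (hp1 : 1 < p) (hp2 : p < 2)
    (ha : 0 ≤ a) (hb : 0 ≤ b) (hd : 0 ≤ d)
    (hpos : 0 < a ^ 2 + b ^ 2) (htri : b ≤ a + d) :
    d ^ p ≤ (4 : ℝ) ^ p * (a ^ p + d ^ p) ^ ((2 - p) / 2) *
      ((a ^ 2 + b ^ 2) ^ ((p - 2) / 2) * d ^ 2) ^ (p / 2) := by
  have hp0 : 0 < p := by linarith
  set X : ℝ := a ^ 2 + b ^ 2 with hX
  set S : ℝ := a ^ p + d ^ p with hS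
  have hS0 : 0 ≤ S := by positivity
  rcases eq_or_lt_of_le hd with h0 | hd0
  · rw [← h0]
    rw [Real.zero_rpow hp0.ne']
    have : ((0:ℝ)^2 : ℝ) = 0 := by norm_num
    rw [this, mul_zero, Real.zero_rpow (by positivity : (p/2:ℝ) ≠ 0), mul_zero]
  -- rewrite the last factor
  have hq : (0:ℝ) < (2 - p) / 2 := by linarith
  set q : ℝ := (2 - p) / 2 with hqdef
  have hfac : (X ^ ((p - 2) / 2) * d ^ 2) ^ (p / 2)
      = X ^ ((p - 2) / 2 * (p / 2)) * d ^ p := by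
    rw [Real.mul_rpow (Real.rpow_nonneg hpos.le _) (sq_nonneg d),
      ← Real.rpow_natCast d 2, ← Real.rpow_mul hpos.le, ← Real.rpow_mul hd]
    norm_num
    left
    rw [show (2:ℝ) * (p / 2) = p by ring]
  rw [hfac]
  set t : ℝ := q * (p / 2) with htdef
  have het : (p - 2) / 2 * (p / 2) = -t := by rw [htdef, hqdef]; ring
  rw [het]
  -- key: X ^ t ≤ 4^p * S^q
  have hXle : X ≤ (2 * (a + d)) ^ 2 := by nlinarith
  have ht0 : 0 ≤ t := by positivity
  have had : 0 ≤ a + d := by linarith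
  have h1 : X ^ t ≤ (2 * (a + d)) ^ (2 * t) := by
    calc X ^ t ≤ ((2 * (a + d)) ^ 2) ^ t :=
          Real.rpow_le_rpow hpos.le hXle ht0
      _ = (2 * (a + d)) ^ (2 * t) := by
          rw [← Real.rpow_natCast (2 * (a + d)) 2, ← Real.rpow_mul (by positivity)]
          norm_num
  have h2t : 2 * t = p * q := by rw [htdef]; ring
  have hsum : (a + d) ^ p ≤ 2 ^ p * S := by
    rcases le_total a d with h | h
    · calc (a + d) ^ p ≤ (2 * d) ^ p :=
            Real.rpow_le_rpow had (by linarith) hp0.le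
        _ = 2 ^ p * d ^ p := Real.mul_rpow (by norm_num) hd
        _ ≤ 2 ^ p * S := by
            have : d ^ p ≤ S := by
              rw [hS]; nlinarith [Real.rpow_nonneg ha p]
            exact mul_le_mul_of_nonneg_left this (by positivity)
    · calc (a + d) ^ p ≤ (2 * a) ^ p :=
            Real.rpow_le_rpow had (by linarith) hp0.le
        _ = 2 ^ p * a ^ p := Real.mul_rpow (by norm_num) ha
        _ ≤ 2 ^ p * S := by
            have : a ^ p ≤ S := by
              rw [hS]; nlinarith [Real.rpow_nonneg hd p]
            exact mul_le_mul_of_nonneg_left this (by positivity)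
  have h3 : (a + d) ^ (p * q) ≤ 2 ^ (p * q) * S ^ q := by
    calc (a + d) ^ (p * q) = ((a + d) ^ p) ^ q := Real.rpow_mul had _ _
      _ ≤ (2 ^ p * S) ^ q :=
          Real.rpow_le_rpow (Real.rpow_nonneg had _) hsum hq.le
      _ = (2 ^ p) ^ q * S ^ q := Real.mul_rpow (by positivity) hS0
      _ = 2 ^ (p * q) * S ^ q := by rw [← Real.rpow_mul (by norm_num : (0:ℝ) ≤ 2)]
  have key2 : X ^ t ≤ 4 ^ p * S ^ q := by
    calc X ^ t ≤ (2 * (a + d)) ^ (2 * t) := h1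
      _ = 2 ^ (p * q) * (a + d) ^ (p * q) := by
          rw [h2t, Real.mul_rpow (by norm_num) had]
      _ ≤ 2 ^ (p * q) * (2 ^ (p * q) * S ^ q) :=
          mul_le_mul_of_nonneg_left h3 (by positivity)
      _ = 4 ^ (p * q) * S ^ q := by
          rw [← mul_assoc, ← Real.mul_rpow (by norm_num) (by norm_num : (0:ℝ) ≤ 2)]
          norm_num
      _ ≤ 4 ^ p * S ^ q := by
          apply mul_le_mul_of_nonneg_right _ (Real.rpow_nonneg hS0 _)
          apply Real.rpow_le_rpow_of_exponent_le (by norm_num)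
          rw [hqdef]; nlinarith
  -- conclude
  have hcoef : 1 ≤ 4 ^ p * S ^ q * X ^ (-t) := by
    have := mul_le_mul_of_nonneg_right key2 (Real.rpow_nonneg hpos.le (-t))
    calc (1:ℝ) = X ^ t * X ^ (-t) := by
          rw [← Real.rpow_add hpos, add_neg_cancel, Real.rpow_zero]
      _ ≤ 4 ^ p * S ^ q * X ^ (-t) := this
  calc d ^ p = 1 * d ^ p := (one_mul _).symm
    _ ≤ 4 ^ p * S ^ q * X ^ (-t) * d ^ p :=
        mul_le_mul_of_nonneg_right hcoef (Real.rpow_nonneg hd _)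
    _ = 4 ^ p * S ^ q * (X ^ (-t) * d ^ p) := by ring

/-- For `1 < p < 2` and `z₁, z₂ ∈ ℝⁿ` not both zero:
`|z₁ − z₂|^p ≤ 4^p (|z₁|^p + |z₁−z₂|^p)^{(2−p)/2} Φ(z₁,z₂)^{p/2}` where
`Φ(z₁,z₂) = (|z₁|² + |z₂|²)^{(p−2)/2} |z₁ − z₂|²`. -/
theorem dist_pow_le_phi_subquadratic (n : ℕ) (hn : 2 ≤ n) (p : ℝ) (hp1 : 1 < p) (hp2 : p < 2)
    (z₁ z₂ : EuclideanSpace ℝ (Fin n)) (hz : ¬(z₁ = 0 ∧ z₂ = 0)) :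
    ‖z₁ - z₂‖ ^ p ≤
      (4 : ℝ) ^ p * (‖z₁‖ ^ p + ‖z₁ - z₂‖ ^ p) ^ ((2 - p) / 2) *
        ((‖z₁‖ ^ 2 + ‖z₂‖ ^ 2) ^ ((p - 2) / 2) * ‖z₁ - z₂‖ ^ 2) ^ (p / 2) := by
  have hpos : 0 < ‖z₁‖ ^ 2 + ‖z₂‖ ^ 2 := by
    rcases not_and_or.mp hz with h | h
    · have : 0 < ‖z₁‖ := norm_pos_iff.mpr h
      positivity
    · have : 0 < ‖z₂‖ := norm_pos_iff.mpr h
      positivity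
  have htri : ‖z₂‖ ≤ ‖z₁‖ + ‖z₁ - z₂‖ := by
    have := norm_sub_le z₁ (z₁ - z₂)
    simpa using this
  exact key_ineq p ‖z₁‖ ‖z₂‖ ‖z₁ - z₂‖ hp1 hp2 (norm_nonneg _) (norm_nonneg _)
    (norm_nonneg _) hpos htri
end

section
/- Let n ≥ 2 be an integer. There exist constants δ₀ ∈ (0,1) and C > 0, both depending only on n, with the following property. Let r₀ > 0, δ ∈ (0,δ₀], and let Ω ⊂ ℝⁿ be a bounded open set that is (δ,r₀)-Reifenberg flat. Let ε ∈ (0,1), R ∈ (0, r₀/20], and let V ⊆ W ⊆ Ω be Lebesgue measurable sets such that L^n(V) ≤ ε L^n(B_R(0)), and such that for every ξ ∈ Ω and every ρ ∈ (0,R], if L^n(V ∩ B_ρ(ξ)) > ε L^n(B_ρ(ξ)) then Ω ∩ B_ρ(ξ) ⊆ W. Then L^n(V) ≤ C ε L^n(W). (Vitali-type covering lemma on Reifenberg flat domains.) -/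
/-!
Almost every point `x` of `V` is a Lebesgue density point, so `V` has density above `ε` in some
ball `B(x, ρ)` with `ρ ≤ R`; let `r(x)` be the supremum of such radii. Then `Ω ∩ B(x, r(x)) ⊆ W`,
while `V` has density at most `ε` in `B(x, 3 r(x))`: by maximality if `3 r(x) ≤ R`, and because
`L(V) ≤ ε L(B_R)` otherwise. Reifenberg flatness with `δ ≤ 1/16` places a ball of radius `3r/8`
inside `Ω ∩ B(x, r)` (pushed off a nearby boundary point along the normal `ν`), so
`L(B(x, 3r)) ≤ 8ⁿ L(W ∩ B(x, r))`. A Vitali subfamily of disjoint balls `B(xᵢ, rᵢ)` whose triples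
cover almost all of `V` then gives `L(V) ≤ 8ⁿ ε L(W)`.
-/

open MeasureTheory RealInnerProductSpace

/-- A bounded open set `Ω ⊆ ℝⁿ` is `(δ, r₀)`-Reifenberg flat: near each boundary point,
at each scale `ρ ≤ r₀`, the boundary is trapped between two parallel hyperplanes at
distance `δρ`. -/
def ReifenbergFlat {n : ℕ} (Ω : Set (EuclideanSpace ℝ (Fin n))) (δ r₀ : ℝ) : Prop :=
  ∀ ξ₀ ∈ frontier Ω, ∀ ρ ∈ Set.Ioc (0 : ℝ) r₀,
    ∃ ν : EuclideanSpace ℝ (Fin n), ‖ν‖ = 1 ∧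
      {x ∈ Metric.ball ξ₀ ρ | δ * ρ < ⟪x - ξ₀, ν⟫} ⊆ Ω ∩ Metric.ball ξ₀ ρ ∧
      Ω ∩ Metric.ball ξ₀ ρ ⊆ {x ∈ Metric.ball ξ₀ ρ | -(δ * ρ) < ⟪x - ξ₀, ν⟫}

open Metric Set Filter Topology Function
open scoped ENNReal

section Vitali

variable {α : Type*} [MetricSpace α] [TopologicalSpace.SeparableSpace α] [MeasurableSpace α]
  [OpensMeasurableSpace α]

theorem measure_le_mul_of_forall_inter_ball_le (μ : Measure α) {V W S : Set α} {r : α → ℝ}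
    {R : ℝ} {K : ℝ≥0∞} (hW : MeasurableSet W) (hVS : ∀ᵐ x ∂μ, x ∈ V → x ∈ S)
    (hr : ∀ x ∈ S, 0 < r x ∧ r x ≤ R)
    (hK : ∀ x ∈ S, μ (V ∩ ball x (3 * r x)) ≤ K * μ (W ∩ ball x (r x))) :
    μ V ≤ K * μ W := by
  obtain ⟨u, huS, hud, hcov⟩ := Vitali.exists_disjoint_subfamily_covering_enlargement
    (fun x => ball x (r x)) S r 2 one_lt_two (fun x hx => (hr x hx).1.le) R
    (fun x hx => (hr x hx).2) (fun x hx => nonempty_ball.2 (hr x hx).1)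
  have hu : u.Countable := hud.countable_of_isOpen (fun _ _ => isOpen_ball)
    (fun x hx => nonempty_ball.2 (hr x (huS hx)).1)
  have hcover : V ∩ S ⊆ ⋃ b ∈ u, V ∩ ball b (3 * r b) := by
    rintro x ⟨hxV, hxS⟩
    obtain ⟨b, hbu, ⟨y, hyx, hyb⟩, hrb⟩ := hcov x hxS
    refine mem_biUnion hbu ⟨hxV, ?_⟩
    -- `B(x, r x)` meets `B(b, r b)` and `r x ≤ 2 r b`, so `x ∈ B(b, 3 r b)`.
    rw [mem_ball] at hyx hyb ⊢
    linarith [dist_triangle_left x b y]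
  have hdisj : Pairwise (Disjoint on fun b : u => W ∩ ball (b : α) (r b)) := fun b c hbc =>
    (hud b.2 c.2 (Subtype.coe_injective.ne hbc)).mono inter_subset_right inter_subset_right
  calc μ V ≤ μ (V ∩ S) := measure_mono_ae (hVS.mono fun x hx hxV => ⟨hxV, hx hxV⟩)
    _ ≤ ∑' b : u, μ (V ∩ ball b (3 * r b)) :=
      (measure_mono hcover).trans (measure_biUnion_le μ hu _)
    _ ≤ ∑' b : u, K * μ (W ∩ ball b (r b)) := ENNReal.tsum_le_tsum fun b => hK b (huS b.2)
    _ = K * ∑' b : u, μ (W ∩ ball b (r b)) := ENNReal.tsum_mul_left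
    _ ≤ K * μ W := by
      gcongr
      exact (tsum_meas_le_meas_iUnion_of_disjoint μ (fun b => hW.inter measurableSet_ball)
        hdisj).trans (measure_mono (iUnion_subset fun b => inter_subset_left))

end Vitali

section DensityRadius

variable {α : Type*} [MetricSpace α] [MeasurableSpace α] (μ : Measure α) (V : Set α) (ε : ℝ≥0∞)
  (R : ℝ)

def denseScales (x : α) : Set ℝ :=
  {ρ | ρ ∈ Ioc 0 R ∧ ε * μ (ball x ρ) < μ (V ∩ ball x ρ)}

noncomputable def densityRadius (x : α) : ℝ :=
  sSup (denseScales μ V ε R x)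

variable {μ V ε R} {x : α}

theorem bddAbove_denseScales : BddAbove (denseScales μ V ε R x) :=
  ⟨R, fun _ hρ => hρ.1.2⟩

theorem densityRadius_pos (h : (denseScales μ V ε R x).Nonempty) : 0 < densityRadius μ V ε R x :=
  let ⟨_, hρ⟩ := h
  hρ.1.1.trans_le (le_csSup bddAbove_denseScales hρ)

theorem densityRadius_le (h : (denseScales μ V ε R x).Nonempty) : densityRadius μ V ε R x ≤ R :=
  csSup_le h fun _ hρ => hρ.1.2

theorem inter_ball_densityRadius_subset {Ω W : Set α}
    (h : ∀ ρ ∈ Ioc 0 R, ε * μ (ball x ρ) < μ (V ∩ ball x ρ) → Ω ∩ ball x ρ ⊆ W) :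
    Ω ∩ ball x (densityRadius μ V ε R x) ⊆ W := by
  rintro z ⟨hzΩ, hz⟩
  rcases (denseScales μ V ε R x).eq_empty_or_nonempty with hempty | hne
  · simp [densityRadius, hempty] at hz
  obtain ⟨ρ, ⟨hρR, hρ⟩, hzρ⟩ := exists_lt_of_lt_csSup hne (mem_ball.1 hz)
  exact h ρ hρR hρ ⟨hzΩ, mem_ball.2 hzρ⟩

theorem measure_inter_ball_le_of_densityRadius_lt {ρ : ℝ} (hρ : densityRadius μ V ε R x < ρ)
    (hρR : ρ ≤ R) : μ (V ∩ ball x ρ) ≤ ε * μ (ball x ρ) := by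
  refine not_lt.1 fun hlt => hρ.not_ge (le_csSup bddAbove_denseScales ⟨⟨?_, hρR⟩, hlt⟩)
  exact (Real.sSup_nonneg fun _ hρ' => hρ'.1.1.le).trans_lt hρ

end DensityRadius

section AddHaar

variable {E : Type*} [NormedAddCommGroup E] [MeasurableSpace E] [BorelSpace E] (μ : Measure E)
  [μ.IsAddHaarMeasure] {V : Set E} {ε : ℝ≥0∞} {R : ℝ}

theorem addHaar_inter_ball_le_of_densityRadius_lt (hV : μ V ≤ ε * μ (ball 0 R)) {x : E} {ρ : ℝ}
    (hρ : densityRadius μ V ε R x < ρ) : μ (V ∩ ball x ρ) ≤ ε * μ (ball x ρ) := by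
  rcases le_or_gt ρ R with hρR | hRρ
  · exact measure_inter_ball_le_of_densityRadius_lt hρ hρR
  calc μ (V ∩ ball x ρ) ≤ μ V := measure_mono inter_subset_left
    _ ≤ ε * μ (ball x R) := by rwa [Measure.addHaar_ball_center μ x]
    _ ≤ ε * μ (ball x ρ) := by gcongr

variable [NormedSpace ℝ E] [FiniteDimensional ℝ E]

theorem addHaar_closedBall_ae_eq_ball (x : E) {r : ℝ} (hr : r ≠ 0) :
    closedBall x r =ᵐ[μ] ball x r := by
  refine ae_eq_set.2 ⟨?_, ?_⟩
  · rw [closedBall_sdiff_ball]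
    exact Measure.addHaar_sphere_of_ne_zero μ x hr
  · rw [sdiff_eq_empty.2 ball_subset_closedBall, measure_empty]

theorem denseScales_nonempty_of_tendsto {x : E} (hε : ε < 1) (hR : 0 < R)
    (hx : Tendsto (fun ρ => μ (V ∩ closedBall x ρ) / μ (closedBall x ρ)) (𝓝[>] 0) (𝓝 1)) :
    (denseScales μ V ε R x).Nonempty := by
  obtain ⟨ρ, hρε, hρR⟩ := ((hx.eventually (lt_mem_nhds hε)).and (Ioo_mem_nhdsGT hR)).exists
  have hball := addHaar_closedBall_ae_eq_ball μ x hρR.1.ne'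
  refine ⟨ρ, ⟨hρR.1, hρR.2.le⟩, ?_⟩
  rwa [ENNReal.lt_div_iff_mul_lt (Or.inl (measure_closedBall_pos μ x hρR.1).ne')
    (Or.inl measure_closedBall_lt_top.ne), measure_congr hball,
    measure_congr ((ae_eq_refl V).inter hball)] at hρε

theorem ae_denseScales_nonempty (hV : MeasurableSet V) (hε : ε < 1) (hR : 0 < R) :
    ∀ᵐ x ∂μ, x ∈ V → (denseScales μ V ε R x).Nonempty :=
  (ae_restrict_iff' hV).1 <| (Besicovitch.ae_tendsto_measure_inter_div μ V).mono fun _ hx =>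
    denseScales_nonempty_of_tendsto μ hε hR hx

end AddHaar

theorem exists_mem_frontier_dist_lt {E : Type*} [NormedAddCommGroup E] [NormedSpace ℝ E]
    [FiniteDimensional ℝ E] {Ω : Set E} {x : E} {ρ : ℝ} (hx : x ∈ Ω) (h : ¬ball x ρ ⊆ Ω) :
    ∃ ξ ∈ frontier Ω, dist x ξ < ρ := by
  obtain ⟨y, hyρ, hyΩ⟩ := not_subset.1 h
  obtain ⟨ξ, hξ, hdist⟩ :=
    exists_mem_frontier_infDist_compl_eq_dist hx ((ne_univ_iff_exists_notMem Ω).2 ⟨y, hyΩ⟩)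
  exact ⟨ξ, hξ, hdist ▸ (infDist_le_dist_of_mem hyΩ).trans_lt (mem_ball'.1 hyρ)⟩

theorem ball_subset_halfSpace {F : Type*} [NormedAddCommGroup F] [InnerProductSpace ℝ F]
    {ξ x ν : F} {δ ρ : ℝ} (hν : ‖ν‖ = 1) (hδ : δ ≤ 1 / 16) (hx : -(δ * (2 * ρ)) < ⟪x - ξ, ν⟫) :
    ball (x + (5 / 8 * ρ) • ν) (3 / 8 * ρ) ⊆ {z | δ * (2 * ρ) < ⟪z - ξ, ν⟫} := by
  set c := x + (5 / 8 * ρ) • ν with hc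
  intro z hz
  rw [mem_ball, dist_eq_norm] at hz
  have hρ : 0 < ρ := by linarith [norm_nonneg (z - c)]
  have hsplit : ⟪z - ξ, ν⟫ = ⟪z - c, ν⟫ + 5 / 8 * ρ + ⟪x - ξ, ν⟫ := by
    rw [show z - ξ = z - c + (5 / 8 * ρ) • ν + (x - ξ) by rw [hc]; abel, inner_add_left,
      inner_add_left, real_inner_smul_left, real_inner_self_eq_norm_sq, hν]
    ring
  have hzc : -‖z - c‖ ≤ ⟪z - c, ν⟫ := by
    simpa [hν] using neg_le_of_abs_le (abs_real_inner_le_norm (z - c) ν)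
  show δ * (2 * ρ) < ⟪z - ξ, ν⟫
  -- `⟪z - ξ, ν⟫ > -(3/8) ρ + (5/8) ρ - 2δρ = ρ/4 - 2δρ`, which is `≥ 2δρ` exactly when `δ ≤ 1/16`.
  nlinarith

theorem ReifenbergFlat.exists_ball_subset_inter_ball {n : ℕ} {Ω : Set (EuclideanSpace ℝ (Fin n))}
    {δ r₀ : ℝ} (hΩ : ReifenbergFlat Ω δ r₀) (hδ : δ ≤ 1 / 16) {x : EuclideanSpace ℝ (Fin n)}
    (hx : x ∈ Ω) {ρ : ℝ} (hρ : 0 < ρ) (hρr₀ : 2 * ρ ≤ r₀) :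
    ∃ c, ball c (3 / 8 * ρ) ⊆ Ω ∩ ball x ρ := by
  by_cases hball : ball x ρ ⊆ Ω
  · exact ⟨x, (ball_subset_ball (by linarith)).trans (subset_inter hball subset_rfl)⟩
  obtain ⟨ξ, hξ, hxξ⟩ := exists_mem_frontier_dist_lt hx hball
  obtain ⟨ν, hν, hinside, houtside⟩ := hΩ ξ hξ (2 * ρ) ⟨by positivity, hρr₀⟩
  have hxν := (houtside ⟨hx, mem_ball.2 (by linarith)⟩).2
  have hsub : ball (x + (5 / 8 * ρ) • ν) (3 / 8 * ρ) ⊆ ball x ρ := by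
    refine ball_subset_ball' ?_
    rw [dist_eq_norm, add_sub_cancel_left, norm_smul, hν, Real.norm_of_nonneg (by positivity)]
    linarith
  refine ⟨_, subset_inter (fun z hz => (hinside ⟨?_, ball_subset_halfSpace hν hδ hxν hz⟩).1) hsub⟩
  exact mem_ball.2 ((dist_triangle z x ξ).trans_lt (by linarith [mem_ball.1 (hsub hz)]))

theorem ReifenbergFlat.volume_ball_three_mul_le {n : ℕ} {Ω : Set (EuclideanSpace ℝ (Fin n))}
    {δ r₀ : ℝ} (hΩ : ReifenbergFlat Ω δ r₀) (hδ : δ ≤ 1 / 16) {x : EuclideanSpace ℝ (Fin n)}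
    (hx : x ∈ Ω) {ρ : ℝ} (hρ : 0 < ρ) (hρr₀ : 2 * ρ ≤ r₀) :
    volume (ball x (3 * ρ)) ≤ ENNReal.ofReal (8 ^ n) * volume (Ω ∩ ball x ρ) := by
  obtain ⟨c, hc⟩ := hΩ.exists_ball_subset_inter_ball hδ hx hρ hρr₀
  calc volume (ball x (3 * ρ)) = ENNReal.ofReal (8 ^ n) * volume (ball c (3 / 8 * ρ)) := by
        rw [Measure.addHaar_ball_mul_of_pos _ _ (by norm_num), Measure.addHaar_ball_mul_of_pos _ _
          (by norm_num), finrank_euclideanSpace_fin, ← mul_assoc, ← ENNReal.ofReal_mul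
          (by positivity), ← mul_pow]
        norm_num
    _ ≤ ENNReal.ofReal (8 ^ n) * volume (Ω ∩ ball x ρ) := by gcongr

theorem covering_lemma_reifenberg_general (n : ℕ) :
    ∃ δ₀ ∈ Set.Ioo (0 : ℝ) 1, ∃ C : ℝ, 0 < C ∧
      ∀ r₀ : ℝ, 0 < r₀ → ∀ δ ∈ Set.Ioc (0 : ℝ) δ₀,
      ∀ Ω : Set (EuclideanSpace ℝ (Fin n)), IsOpen Ω → Bornology.IsBounded Ω →
        ReifenbergFlat Ω δ r₀ →
      ∀ ε ∈ Set.Ioo (0 : ℝ) 1, ∀ R ∈ Set.Ioc (0 : ℝ) (r₀ / 20),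
      ∀ V W : Set (EuclideanSpace ℝ (Fin n)), MeasurableSet V → MeasurableSet W →
        V ⊆ W → W ⊆ Ω →
        volume V ≤ ENNReal.ofReal ε * volume (Metric.ball (0 : EuclideanSpace ℝ (Fin n)) R) →
        (∀ ξ ∈ Ω, ∀ ρ ∈ Set.Ioc (0 : ℝ) R,
          ENNReal.ofReal ε * volume (Metric.ball ξ ρ) < volume (V ∩ Metric.ball ξ ρ) →
            Ω ∩ Metric.ball ξ ρ ⊆ W) →
        volume V ≤ ENNReal.ofReal (C * ε) * volume W := by
  refine ⟨1 / 16, ⟨by norm_num, by norm_num⟩, 8 ^ n, by positivity, ?_⟩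
  intro r₀ _ δ hδ Ω _ _ hΩ ε hε R hR V W hV hW hVW hWΩ hVsmall hstop
  set r := densityRadius volume V (ENNReal.ofReal ε) R
  set S := {x ∈ V | (denseScales volume V (ENNReal.ofReal ε) R x).Nonempty}
  refine measure_le_mul_of_forall_inter_ball_le volume (S := S) (r := r) hW ?_
    (fun x hx => ⟨densityRadius_pos hx.2, densityRadius_le hx.2⟩) ?_
  · filter_upwards [ae_denseScales_nonempty volume hV (ENNReal.ofReal_lt_one.2 hε.2) hR.1]
      with x hx hxV using ⟨hxV, hx hxV⟩
  rintro x ⟨hxV, hx⟩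
  have hxΩ := hWΩ (hVW hxV)
  have hr := densityRadius_pos hx
  calc volume (V ∩ ball x (3 * r x))
      ≤ ENNReal.ofReal ε * volume (ball x (3 * r x)) :=
        addHaar_inter_ball_le_of_densityRadius_lt volume hVsmall (by linarith)
    _ ≤ ENNReal.ofReal ε * (ENNReal.ofReal (8 ^ n) * volume (Ω ∩ ball x (r x))) := by
        gcongr
        exact hΩ.volume_ball_three_mul_le hδ.2 hxΩ hr (by linarith [densityRadius_le hx, hR.2])
    _ ≤ ENNReal.ofReal (8 ^ n * ε) * volume (W ∩ ball x (r x)) := by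
        rw [ENNReal.ofReal_mul (by positivity), mul_left_comm, ← mul_assoc]
        gcongr _ * volume ?_
        exact subset_inter (inter_ball_densityRadius_subset (hstop x hxΩ)) inter_subset_right

/-- Vitali-type covering lemma on Reifenberg flat domains. -/
theorem covering_lemma_reifenberg (n : ℕ) (hn : 2 ≤ n) :
    ∃ δ₀ ∈ Set.Ioo (0 : ℝ) 1, ∃ C : ℝ, 0 < C ∧
      ∀ r₀ : ℝ, 0 < r₀ → ∀ δ ∈ Set.Ioc (0 : ℝ) δ₀,
      ∀ Ω : Set (EuclideanSpace ℝ (Fin n)), IsOpen Ω → Bornology.IsBounded Ω →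
        ReifenbergFlat Ω δ r₀ →
      ∀ ε ∈ Set.Ioo (0 : ℝ) 1, ∀ R ∈ Set.Ioc (0 : ℝ) (r₀ / 20),
      ∀ V W : Set (EuclideanSpace ℝ (Fin n)), MeasurableSet V → MeasurableSet W →
        V ⊆ W → W ⊆ Ω →
        volume V ≤ ENNReal.ofReal ε * volume (Metric.ball (0 : EuclideanSpace ℝ (Fin n)) R) →
        (∀ ξ ∈ Ω, ∀ ρ ∈ Set.Ioc (0 : ℝ) R,
          ENNReal.ofReal ε * volume (Metric.ball ξ ρ) < volume (V ∩ Metric.ball ξ ρ) →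
            Ω ∩ Metric.ball ξ ρ ⊆ W) →
        volume V ≤ ENNReal.ofReal (C * ε) * volume W :=
  covering_lemma_reifenberg_general n
end

section
/- Let n ≥ 2 be an integer, α ∈ [0,n), and let g : ℝⁿ → [0,∞) be locally integrable. For ζ ∈ ℝⁿ and ρ > 0 define M^ρ_α g(ζ) = sup_{0 < ρ' < ρ} (ρ')^α ⨍_{B_{ρ'}(ζ)} g(y) dy and T^ρ_α g(ζ) = sup_{ρ' ≥ ρ} (ρ')^α ⨍_{B_{ρ'}(ζ)} g(y) dy. If ξ ∈ ℝⁿ, ρ > 0, λ > 0 and δ > 3^n, and if there exists z₂ ∈ B_ρ(ξ) with M_α g(z₂) ≤ λ, then the set {ζ ∈ B_ρ(ξ) : T^ρ_α g(ζ) > δλ} is empty; consequently, for every ζ ∈ B_ρ(ξ), M_α g(ζ) > δλ implies M^ρ_α g(ζ) > δλ. -/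
/-!
For `ρ' ≥ ρ` and `ζ, z₂ ∈ B_ρ(ξ)` we have `|ζ - z₂| < 2ρ ≤ 2ρ'`, so `B_{ρ'}(ζ) ⊆ B_{3ρ'}(z₂)`, a ball
of `3ⁿ` times the volume. Hence every average in the tail `T^ρ_α g(ζ)` is at most `3ⁿ` times an
average in `M_α g(z₂)` (for `α ≥ 0` the weight `ρ'^α` only grows), giving
`T^ρ_α g(ζ) ≤ 3ⁿ M_α g(z₂) ≤ 3ⁿ λ ≤ δλ`. Since `M_α g = max (M^ρ_α g, T^ρ_α g)`, a point where
`M_α g > δλ` must have `M^ρ_α g > δλ`.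
-/

open MeasureTheory ENNReal

/-- The truncated fractional maximal function
`M^ρ_α g (ζ) = sup_{0 < ρ' < ρ} (ρ')^α ⨍_{B_{ρ'}(ζ)} g`. -/
noncomputable def truncFracMax (n : ℕ) (α ρ : ℝ) (g : EuclideanSpace ℝ (Fin n) → ℝ)
    (ζ : EuclideanSpace ℝ (Fin n)) : ℝ≥0∞ :=
  ⨆ (ρ' : ℝ) (_ : 0 < ρ') (_ : ρ' < ρ),
    ENNReal.ofReal (ρ' ^ α) * ⨍⁻ y in Metric.ball ζ ρ', ENNReal.ofReal |g y| ∂volume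

/-- The tail fractional maximal function
`T^ρ_α g (ζ) = sup_{ρ' ≥ ρ} (ρ')^α ⨍_{B_{ρ'}(ζ)} g`. -/
noncomputable def tailFracMax (n : ℕ) (α ρ : ℝ) (g : EuclideanSpace ℝ (Fin n) → ℝ)
    (ζ : EuclideanSpace ℝ (Fin n)) : ℝ≥0∞ :=
  ⨆ (ρ' : ℝ) (_ : ρ ≤ ρ'),
    ENNReal.ofReal (ρ' ^ α) * ⨍⁻ y in Metric.ball ζ ρ', ENNReal.ofReal |g y| ∂volume

open Metric Module Measure

section Average

variable {X : Type*} [MeasurableSpace X] {μ : Measure X}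

theorem setLAverage_le_measure_div_mul_setLAverage_of_subset {s t : Set X} (f : X → ℝ≥0∞)
    (hst : s ⊆ t) (hs : μ s ≠ 0) (ht : μ t ≠ ∞) :
    ⨍⁻ x in s, f x ∂μ ≤ μ t / μ s * ⨍⁻ x in t, f x ∂μ := by
  have ht0 : μ t ≠ 0 := fun h => hs (measure_mono_null hst h)
  rw [setLAverage_eq, setLAverage_eq]
  calc (∫⁻ x in s, f x ∂μ) / μ s ≤ (∫⁻ x in t, f x ∂μ) / μ s := by gcongr
    _ = (∫⁻ x in t, f x ∂μ) / μ t * (μ t / μ s) := by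
        rw [div_eq_mul_inv, div_eq_mul_inv, div_eq_mul_inv, mul_assoc, ← mul_assoc (μ t)⁻¹,
          ENNReal.inv_mul_cancel ht0 ht, one_mul]
    _ = μ t / μ s * ((∫⁻ x in t, f x ∂μ) / μ t) := mul_comm _ _

end Average

section Ball

variable {E : Type*} [NormedAddCommGroup E] [NormedSpace ℝ E] [MeasurableSpace E] [BorelSpace E]
  [FiniteDimensional ℝ E] (μ : Measure E) [μ.IsAddHaarMeasure]

theorem addHaar_ball_mul_eq_mul_addHaar_ball (x y : E) {c : ℝ} (hc : 0 < c) (r : ℝ) :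
    μ (ball y (c * r)) = ENNReal.ofReal (c ^ finrank ℝ E) * μ (ball x r) := by
  rw [addHaar_ball_mul_of_pos μ y hc, addHaar_ball_center μ x]

theorem setLAverage_ball_le_of_subset_ball_mul (f : E → ℝ≥0∞) {x y : E} {c r : ℝ}
    (hc : 0 < c) (hr : 0 < r) (hxy : ball x r ⊆ ball y (c * r)) :
    ⨍⁻ z in ball x r, f z ∂μ ≤
      ENNReal.ofReal (c ^ finrank ℝ E) * ⨍⁻ z in ball y (c * r), f z ∂μ := by
  have hx0 : μ (ball x r) ≠ 0 := (measure_ball_pos μ x hr).ne'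
  refine (setLAverage_le_measure_div_mul_setLAverage_of_subset f hxy hx0
    measure_ball_lt_top.ne).trans_eq ?_
  rw [addHaar_ball_mul_eq_mul_addHaar_ball μ x y hc r,
    ENNReal.mul_div_cancel_right hx0 measure_ball_lt_top.ne]

end Ball

section FracMax

variable {n : ℕ} {α ρ : ℝ} {g : EuclideanSpace ℝ (Fin n) → ℝ}

theorem ofReal_rpow_mul_setLAverage_le_fracMax (x : EuclideanSpace ℝ (Fin n)) {r : ℝ}
    (hr : 0 < r) :
    ENNReal.ofReal (r ^ α) * ⨍⁻ y in ball x r, ENNReal.ofReal |g y| ∂volume ≤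
      fracMax n α g x :=
  le_iSup₂ (f := fun r (_ : 0 < r) =>
    ENNReal.ofReal (r ^ α) * ⨍⁻ y in ball x r, ENNReal.ofReal |g y| ∂volume) r hr

theorem fracMax_le_truncFracMax_sup_tailFracMax (ζ : EuclideanSpace ℝ (Fin n)) :
    fracMax n α g ζ ≤ truncFracMax n α ρ g ζ ⊔ tailFracMax n α ρ g ζ := by
  refine iSup₂_le fun r hr => ?_
  rcases lt_or_ge r ρ with hrρ | hρr
  · exact le_sup_of_le_left (le_iSup_of_le r (le_iSup_of_le hr (le_iSup_of_le hrρ le_rfl)))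
  · exact le_sup_of_le_right (le_iSup_of_le r (le_iSup_of_le hρr le_rfl))

theorem tailFracMax_le_three_pow_mul_fracMax (hα : 0 ≤ α) (hρ : 0 < ρ)
    {ζ z : EuclideanSpace ℝ (Fin n)} (hd : dist ζ z ≤ 2 * ρ) :
    tailFracMax n α ρ g ζ ≤ 3 ^ n * fracMax n α g z := by
  refine iSup₂_le fun r hρr => ?_
  have hr : 0 < r := hρ.trans_le hρr
  have hsub : ball ζ r ⊆ ball z (3 * r) := ball_subset_ball' (by linarith)
  have haverage := setLAverage_ball_le_of_subset_ball_mul volume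
    (fun y => ENNReal.ofReal |g y|) (by norm_num) hr hsub
  rw [finrank_euclideanSpace_fin, ENNReal.ofReal_pow (by norm_num), ENNReal.ofReal_ofNat]
    at haverage
  calc ENNReal.ofReal (r ^ α) * ⨍⁻ y in ball ζ r, ENNReal.ofReal |g y| ∂volume
      ≤ ENNReal.ofReal ((3 * r) ^ α) *
          (3 ^ n * ⨍⁻ y in ball z (3 * r), ENNReal.ofReal |g y| ∂volume) := by
        gcongr
        linarith
    _ = 3 ^ n * (ENNReal.ofReal ((3 * r) ^ α) *
          ⨍⁻ y in ball z (3 * r), ENNReal.ofReal |g y| ∂volume) := mul_left_comm _ _ _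
    _ ≤ 3 ^ n * fracMax n α g z := by
        gcongr; exact ofReal_rpow_mul_setLAverage_le_fracMax z (by positivity)

end FracMax

theorem tail_fracMax_levelset_empty_general (n : ℕ) (α : ℝ) (hα0 : 0 ≤ α)
    (g : EuclideanSpace ℝ (Fin n) → ℝ)
    (ξ : EuclideanSpace ℝ (Fin n)) (ρ lam δ : ℝ)
    (hδ : (3 : ℝ) ^ n < δ)
    (z₂ : EuclideanSpace ℝ (Fin n)) (hz₂ : z₂ ∈ Metric.ball ξ ρ)
    (hz₂M : fracMax n α g z₂ ≤ ENNReal.ofReal lam) :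
    {ζ ∈ Metric.ball ξ ρ | ENNReal.ofReal (δ * lam) < tailFracMax n α ρ g ζ} = ∅ ∧
      ∀ ζ ∈ Metric.ball ξ ρ,
        ENNReal.ofReal (δ * lam) < fracMax n α g ζ →
          ENNReal.ofReal (δ * lam) < truncFracMax n α ρ g ζ := by
  have hρ : 0 < ρ := pos_of_mem_ball hz₂
  have hthree_pow_le : (3 : ℝ≥0∞) ^ n ≤ ENNReal.ofReal δ := by
    rw [← ENNReal.ofReal_ofNat, ← ENNReal.ofReal_pow (by norm_num)]
    exact ENNReal.ofReal_le_ofReal hδ.le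
  have htail : ∀ ζ ∈ ball ξ ρ, tailFracMax n α ρ g ζ ≤ ENNReal.ofReal (δ * lam) := by
    intro ζ hζ
    have hd : dist ζ z₂ ≤ 2 * ρ := by
      linarith [dist_triangle_right ζ z₂ ξ, mem_ball.1 hζ, mem_ball.1 hz₂]
    calc tailFracMax n α ρ g ζ ≤ 3 ^ n * fracMax n α g z₂ :=
          tailFracMax_le_three_pow_mul_fracMax hα0 hρ hd
      _ ≤ ENNReal.ofReal δ * ENNReal.ofReal lam := mul_le_mul' hthree_pow_le hz₂M
      _ = ENNReal.ofReal (δ * lam) :=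
          (ENNReal.ofReal_mul ((pow_nonneg zero_le_three n).trans hδ.le)).symm
  refine ⟨Set.eq_empty_iff_forall_notMem.2 fun ζ ⟨hζ, hlt⟩ => (hlt.trans_le (htail ζ hζ)).false,
    fun ζ hζ hM => ?_⟩
  exact (lt_sup_iff.1 (hM.trans_le (fracMax_le_truncFracMax_sup_tailFracMax ζ))).resolve_right
    (htail ζ hζ).not_gt

/-- If `M_α g (z₂) ≤ λ` for some `z₂ ∈ B_ρ(ξ)` and `δ > 3^n`, then the tail maximal
function never exceeds `δλ` on `B_ρ(ξ)`; hence on `B_ρ(ξ)`, `M_α g > δλ` forces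
`M^ρ_α g > δλ`. -/
theorem tail_fracMax_levelset_empty (n : ℕ) (hn : 2 ≤ n) (α : ℝ) (hα0 : 0 ≤ α) (hα : α < n)
    (g : EuclideanSpace ℝ (Fin n) → ℝ) (hg0 : ∀ x, 0 ≤ g x)
    (hgloc : MeasureTheory.LocallyIntegrable g volume)
    (ξ : EuclideanSpace ℝ (Fin n)) (ρ lam δ : ℝ) (hρ : 0 < ρ) (hlam : 0 < lam)
    (hδ : (3 : ℝ) ^ n < δ)
    (z₂ : EuclideanSpace ℝ (Fin n)) (hz₂ : z₂ ∈ Metric.ball ξ ρ)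
    (hz₂M : fracMax n α g z₂ ≤ ENNReal.ofReal lam) :
    {ζ ∈ Metric.ball ξ ρ | ENNReal.ofReal (δ * lam) < tailFracMax n α ρ g ζ} = ∅ ∧
      ∀ ζ ∈ Metric.ball ξ ρ,
        ENNReal.ofReal (δ * lam) < fracMax n α g ζ →
          ENNReal.ofReal (δ * lam) < truncFracMax n α ρ g ζ :=
  tail_fracMax_levelset_empty_general n α hα0 g ξ ρ lam δ hδ z₂ hz₂ hz₂M
end
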